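/- arXiv:2107.03745 — 2 statements merged into one kernel-verified Lean document; each statement's English description precedes it below -/
import Mathlib

section
/- The matrix r₁r₂r₃, where r₁, r₂, r₃ are the generators of the reflection group G₃₃₆, satisfies (r₁r₂r₃)⁷ = −id, hence r₁r₂r₃ has order 14 in GL(3,C). -/
/-!
Write `M = r₁r₂r₃`. Its characteristic polynomial is `X³ - ᾱX² - αX + 1`, and since `α + ᾱ = 1`
and `αᾱ = 2` this cubic, its conjugate and `X + 1` multiply to `X⁷ + 1` (the cyclotomic factor
`Φ₁₄` splits over `ℚ(√-7)`). Cayley–Hamilton gives `M⁷ = -1`, and as `M ≠ -1` the order of `M`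
is `14`.
-/

noncomputable section

def Kalpha : ℂ := (1 + Complex.I * Real.sqrt 7) / 2
def Kalphabar : ℂ := (1 - Complex.I * Real.sqrt 7) / 2

def r1 : Matrix (Fin 3) (Fin 3) ℂ := !![1,0,0; 0,0,1; 0,1,0]
def r2 : Matrix (Fin 3) (Fin 3) ℂ := !![1,0,0; 0,1,0; 0,0,-1]
def r3 : Matrix (Fin 3) (Fin 3) ℂ :=
  (1/2 : ℂ) • !![1,-1,-Kalpha; -1,1,-Kalpha; -Kalphabar,-Kalphabar,0]

open Polynomial Matrix

theorem orderOf_eq_two_mul_of_pow_eq_neg_one {G : Type*} [Monoid G] [HasDistribNeg G] {x : G}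
    {p : ℕ} (hp : p.Prime) (hodd : Odd p) (hneg : (-1 : G) ≠ 1) (hx : x ^ p = -1)
    (hx1 : x ≠ -1) : orderOf x = 2 * p := by
  have hpow : x ^ (2 * p) = 1 := by rw [mul_comm, pow_mul, hx, neg_one_sq]
  refine orderOf_eq_of_pow_and_pow_div_prime (Nat.mul_pos two_pos hp.pos) hpow fun q hq hqdvd => ?_
  rcases hq.dvd_mul.1 hqdvd with hq2 | hqp
  · rwa [(Nat.prime_dvd_prime_iff_eq hq Nat.prime_two).1 hq2, Nat.mul_div_cancel_left _ two_pos,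
      hx]
  · rw [(Nat.prime_dvd_prime_iff_eq hq hp).1 hqp, Nat.mul_div_cancel _ hp.pos]
    intro hsq
    obtain ⟨k, rfl⟩ := hodd
    exact hx1 (by rw [← hx, pow_succ, pow_mul, hsq, one_pow, one_mul])

theorem Matrix.charpoly_fin_three {R : Type*} [CommRing R] (M : Matrix (Fin 3) (Fin 3) R) :
    M.charpoly = X ^ 3 - C M.trace * X ^ 2
      + C (M 0 0 * M 1 1 - M 0 1 * M 1 0 + M 0 0 * M 2 2 - M 0 2 * M 2 0
        + M 1 1 * M 2 2 - M 1 2 * M 2 1) * X - C M.det := by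
  simp only [charpoly, det_fin_three, charmatrix_apply, trace_fin_three, diagonal_apply,
    Fin.reduceEq, ↓reduceIte, map_add, map_sub, map_mul]
  ring

theorem Matrix.pow_eq_neg_one_of_charpoly_dvd {n R : Type*} [Fintype n] [DecidableEq n]
    [CommRing R] {M : Matrix n n R} {k : ℕ} (h : M.charpoly ∣ X ^ k + 1) : M ^ k = -1 := by
  simpa [eq_neg_iff_add_eq_zero] using aeval_eq_zero_of_dvd_aeval_eq_zero h M.aeval_self_charpoly

theorem Polynomial.X_pow_seven_add_one_eq_mul {R : Type*} [CommRing R] {a b : R} (hsum : a + b = 1)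
    (hprod : a * b = 2) :
    (X ^ 7 + 1 : R[X]) =
      (X + 1) * (X ^ 3 - C a * X ^ 2 - C b * X + 1) * (X ^ 3 - C b * X ^ 2 - C a * X + 1) := by
  have hs : C a + C b = (1 : R[X]) := by rw [← C_add, hsum, C_1]
  have hp : C a * C b = (2 : R[X]) := by rw [← C_mul, hprod, C_ofNat]
  linear_combination (X + 2 * X ^ 2 + 2 * X ^ 5 + X ^ 6 - (C a + C b) * (X ^ 3 + X ^ 4)) * hs
    - (X ^ 2 - X ^ 3 - X ^ 4 + X ^ 5) * hp

theorem Kalpha_add_Kalphabar : Kalpha + Kalphabar = 1 := by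
  unfold Kalpha Kalphabar
  ring

theorem Kalpha_mul_Kalphabar : Kalpha * Kalphabar = 2 := by
  have h7 : ((Real.sqrt 7 : ℝ) : ℂ) ^ 2 = 7 := by
    norm_cast
    exact Real.sq_sqrt (by norm_num)
  unfold Kalpha Kalphabar
  linear_combination (-Complex.I ^ 2 / 4) * h7 - (7 / 4 : ℂ) * Complex.I_sq

theorem r1_mul_r2_mul_r3 :
    r1 * r2 * r3 = !![1 / 2, -1 / 2, -Kalpha / 2;
      Kalphabar / 2, Kalphabar / 2, 0;
      -1 / 2, 1 / 2, -Kalpha / 2] := by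
  ext i j
  fin_cases i <;> fin_cases j <;> simp [r1, r2, r3, mul_apply, Fin.sum_univ_succ] <;> ring

theorem charpoly_r1_mul_r2_mul_r3 :
    (r1 * r2 * r3).charpoly = X ^ 3 - C Kalphabar * X ^ 2 - C Kalpha * X + 1 := by
  have hsum := Kalpha_add_Kalphabar
  have hprod := Kalpha_mul_Kalphabar
  set M := r1 * r2 * r3 with hM
  have htrace : M.trace = Kalphabar := by
    simp only [hM, r1_mul_r2_mul_r3, trace_fin_three, of_apply, cons_val', cons_val_zero,
      cons_val_one, cons_val, cons_val_fin_one]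
    linear_combination (-1 / 2 : ℂ) * hsum
  have hminors : M 0 0 * M 1 1 - M 0 1 * M 1 0 + M 0 0 * M 2 2 - M 0 2 * M 2 0
      + M 1 1 * M 2 2 - M 1 2 * M 2 1 = -Kalpha := by
    simp only [hM, r1_mul_r2_mul_r3, of_apply, cons_val', cons_val_zero, cons_val_one, cons_val,
      cons_val_fin_one]
    linear_combination (1 / 2 : ℂ) * hsum - (1 / 4 : ℂ) * hprod
  have hdet : M.det = -1 := by
    simp only [hM, r1_mul_r2_mul_r3, det_fin_three, of_apply, cons_val', cons_val_zero,
      cons_val_one, cons_val, cons_val_fin_one]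
    linear_combination (-1 / 2 : ℂ) * hprod
  rw [charpoly_fin_three, htrace, hminors, hdet, C_neg, C_neg, C_1]
  ring

theorem r1_mul_r2_mul_r3_ne_neg_one : r1 * r2 * r3 ≠ -1 := by
  intro h
  have h00 := congrFun (congrFun h 0) 0
  norm_num [r1_mul_r2_mul_r3] at h00

/-- `(r₁r₂r₃)⁷ = -id`, so `r₁r₂r₃` has order `14`. -/
theorem coxeter_element_order_fourteen :
    (r1 * r2 * r3) ^ 7 = -1 ∧ orderOf (r1 * r2 * r3) = 14 := by
  have hpow : (r1 * r2 * r3) ^ 7 = -1 := by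
    refine pow_eq_neg_one_of_charpoly_dvd ?_
    rw [charpoly_r1_mul_r2_mul_r3,
      X_pow_seven_add_one_eq_mul Kalpha_add_Kalphabar Kalpha_mul_Kalphabar]
    exact Dvd.intro_left _ rfl
  have hneg : (-1 : Matrix (Fin 3) (Fin 3) ℂ) ≠ 1 := by
    intro h
    have h00 := congrFun (congrFun h 0) 0
    norm_num at h00
  exact ⟨hpow, orderOf_eq_two_mul_of_pow_eq_neg_one Nat.prime_seven ⟨3, rfl⟩ hneg hpow
    r1_mul_r2_mul_r3_ne_neg_one⟩

end
end

section
/- The matrix g₇ = (1/2)[[-1,1,α],[-ᾱ,-ᾱ,0],[1,-1,α]], with α = (1+i√7)/2, has order exactly 7 in GL(3,C). -/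
/-!
Since `α² = α - 2`, the characteristic polynomial of `g₇` is `X³ - (α - 1)X² - αX - 1`, whose roots
are `ζ, ζ², ζ⁴` for a primitive 7th root of unity `ζ` (note `α - 1 = ζ + ζ² + ζ⁴`). Together with
its conjugate `X³ + αX² + (α - 1)X - 1` it divides `X⁷ - 1`, so Cayley–Hamilton gives `g₇⁷ = 1`.
As `g₇ ≠ 1` and 7 is prime, the order is 7.
-/

noncomputable section

def g7 : Matrix (Fin 3) (Fin 3) ℂ :=
  (1/2 : ℂ) • !![-1,1,Kalpha; -Kalphabar,-Kalphabar,0; 1,-1,Kalpha]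

open Polynomial Matrix

theorem Matrix.pow_eq_one_of_charpoly_dvd {R n : Type*} [CommRing R] [Fintype n] [DecidableEq n]
    {M : Matrix n n R} {k : ℕ} (h : M.charpoly ∣ X ^ k - 1) : M ^ k = 1 := by
  simpa only [aeval_sub, map_pow, aeval_X, map_one, sub_eq_zero] using
    aeval_eq_zero_of_dvd_aeval_eq_zero h M.aeval_self_charpoly

theorem X_pow_seven_sub_one_eq_mul_of_sq_eq {R : Type*} [CommRing R] {a : R} (ha : a ^ 2 = a - 2) :
    (X ^ 7 - 1 : R[X]) = (X - 1) * (X ^ 3 - C (a - 1) * X ^ 2 - C a * X - 1)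
      * (X ^ 3 + C a * X ^ 2 + C (a - 1) * X - 1) := by
  have hC := congrArg C ha
  simp only [map_pow, map_sub, map_ofNat] at hC
  simp only [map_sub, map_one]
  linear_combination (X - 1) * X ^ 2 * (X + 1) ^ 2 * hC

theorem Kalpha_sq : Kalpha ^ 2 = Kalpha - 2 := by
  have h7 : ((Real.sqrt 7 : ℝ) : ℂ) ^ 2 = 7 := by
    rw [← Complex.ofReal_pow, Real.sq_sqrt (by norm_num)]
    norm_num
  unfold Kalpha
  linear_combination (((Real.sqrt 7 : ℝ) : ℂ) ^ 2 / 4) * Complex.I_sq - (1 / 4) * h7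

theorem Kalphabar_eq : Kalphabar = 1 - Kalpha := by
  unfold Kalpha Kalphabar
  ring

theorem g7_eq : g7 = (1 / 2 : ℂ) • !![-1, 1, Kalpha; Kalpha - 1, Kalpha - 1, 0; 1, -1, Kalpha] := by
  rw [g7, Kalphabar_eq, neg_sub]

theorem g7_charpoly : g7.charpoly = X ^ 3 - C (Kalpha - 1) * X ^ 2 - C Kalpha * X - 1 := by
  have htrace : g7.trace = Kalpha - 1 := by
    rw [g7_eq, trace_fin_three]
    simp only [Matrix.smul_apply, of_apply, cons_val', cons_val_zero, cons_val_one, cons_val,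
      cons_val_fin_one, smul_eq_mul]
    ring
  have hminors : g7 0 0 * g7 1 1 - g7 0 1 * g7 1 0 + g7 0 0 * g7 2 2 - g7 0 2 * g7 2 0
      + g7 1 1 * g7 2 2 - g7 1 2 * g7 2 1 = -Kalpha := by
    rw [g7_eq]
    simp only [Matrix.smul_apply, of_apply, cons_val', cons_val_zero, cons_val_one, cons_val,
      cons_val_fin_one, smul_eq_mul]
    linear_combination (1 / 4 : ℂ) * Kalpha_sq
  have hdet : g7.det = 1 := by
    rw [g7_eq, det_fin_three]
    simp only [Matrix.smul_apply, of_apply, cons_val', cons_val_zero, cons_val_one, cons_val,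
      cons_val_fin_one, smul_eq_mul]
    linear_combination (-1 / 2 : ℂ) * Kalpha_sq
  rw [charpoly_fin_three, htrace, hminors, hdet, map_neg, map_one]
  ring

theorem g7_pow_seven : g7 ^ 7 = 1 := by
  apply pow_eq_one_of_charpoly_dvd
  rw [g7_charpoly, X_pow_seven_sub_one_eq_mul_of_sq_eq Kalpha_sq, mul_right_comm]
  exact dvd_mul_left _ _

theorem g7_ne_one : g7 ≠ 1 := by
  intro h
  have h00 := congrFun (congrFun h 0) 0
  norm_num [g7_eq] at h00

/-- The matrix `g₇` has order exactly `7`. -/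
theorem g7_order_seven : orderOf g7 = 7 :=
  have : Fact (Nat.Prime 7) := ⟨by norm_num⟩
  orderOf_eq_prime g7_pow_seven g7_ne_one

end
end
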